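/- Let d ≥ 1, Ω ⊆ ℝ^d open, ρ : Ω → (0,∞) smooth, and h : (0,∞) → ℝ smooth. Then on Ω: 2 ρ ∇( h'(ρ) div( h'(ρ) ∇√ρ ) / √ρ ) = ∇( h'(ρ) Δ(h(ρ)) ) − 4 div( (h'(ρ) ∇√ρ) ⊗ (h'(ρ) ∇√ρ) ). -/

import Mathlib

open MeasureTheory Real

noncomputable section

/-- Partial derivative of a scalar field in the coordinate direction `i`. -/
def pd {d : ℕ} (i : Fin d) (f : (Fin d → ℝ) → ℝ) (x : Fin d → ℝ) : ℝ :=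
  fderiv ℝ f x (Pi.single i 1)

/-- Gradient of a scalar field. -/
def grad {d : ℕ} (f : (Fin d → ℝ) → ℝ) (x : Fin d → ℝ) : Fin d → ℝ :=
  fun i => pd i f x

/-- Divergence of a vector field. -/
def dvg {d : ℕ} (u : (Fin d → ℝ) → (Fin d → ℝ)) (x : Fin d → ℝ) : ℝ :=
  ∑ i, pd i (fun y => u y i) x

/-- Row-wise divergence of a matrix field: `(dvgM M x) i = ∑ j, ∂_j M_{ij}`. -/
def dvgM {d : ℕ} (M : (Fin d → ℝ) → Fin d → Fin d → ℝ) (x : Fin d → ℝ) : Fin d → ℝ :=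
  fun i => ∑ j, pd j (fun y => M y i j) x

/-- Hessian of a scalar field. -/
def hess {d : ℕ} (f : (Fin d → ℝ) → ℝ) (x : Fin d → ℝ) : Fin d → Fin d → ℝ :=
  fun i j => pd i (fun y => pd j f y) x

/-- Laplacian of a scalar field. -/
def lap {d : ℕ} (f : (Fin d → ℝ) → ℝ) (x : Fin d → ℝ) : ℝ :=
  ∑ i, pd i (fun y => pd i f y) x

/-- Jacobian matrix of a vector field: `(jac u x) i j = ∂_j u_i`. -/
def jac {d : ℕ} (u : (Fin d → ℝ) → (Fin d → ℝ)) (x : Fin d → ℝ) : Fin d → Fin d → ℝ :=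
  fun i j => pd j (fun y => u y i) x

/-- Symmetric part of the gradient of a vector field, `Du = (∇u + (∇u)ᵀ)/2`. -/
def symD {d : ℕ} (u : (Fin d → ℝ) → (Fin d → ℝ)) (x : Fin d → ℝ) : Fin d → Fin d → ℝ :=
  fun i j => (jac u x i j + jac u x j i) / 2

/-- Antisymmetric part of the gradient of a vector field, `Au = (∇u − (∇u)ᵀ)/2`. -/
def antiD {d : ℕ} (u : (Fin d → ℝ) → (Fin d → ℝ)) (x : Fin d → ℝ) : Fin d → Fin d → ℝ :=
  fun i j => (jac u x i j - jac u x j i) / 2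

/-- Tensor product of two vectors: `(a ⊗ b)_{ij} = a_i b_j`. -/
def tens {d : ℕ} (a b : Fin d → ℝ) : Fin d → Fin d → ℝ := fun i j => a i * b j

/-- ℤ^d-periodicity: a function of this kind descends to the torus `T^d = ℝ^d/ℤ^d`. -/
def SpacePeriodic {d : ℕ} {E : Type*} (f : (Fin d → ℝ) → E) : Prop :=
  ∀ x : Fin d → ℝ, ∀ n : Fin d → ℤ, f (x + fun i => (n i : ℝ)) = f x

/-- Fundamental domain of the torus `T^d = ℝ^d/ℤ^d` (with its probability Lebesgue measure). -/
def unitBox (d : ℕ) : Set (Fin d → ℝ) := Set.Icc 0 1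

open ContDiff Filter

section AuxPD
variable {d : ℕ} {f g : (Fin d → ℝ) → ℝ} {x : Fin d → ℝ} {i j : Fin d}

theorem pd_congr_nhds (h : f =ᶠ[nhds x] g) : pd i f x = pd i g x := by
  unfold pd; rw [h.fderiv_eq]

theorem pd_add (hf : DifferentiableAt ℝ f x) (hg : DifferentiableAt ℝ g x) :
    pd i (fun y => f y + g y) x = pd i f x + pd i g x := by
  unfold pd; rw [fderiv_fun_add hf hg]; simp

theorem pd_mul (hf : DifferentiableAt ℝ f x) (hg : DifferentiableAt ℝ g x) :
    pd i (fun y => f y * g y) x = pd i f x * g x + f x * pd i g x := by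
  unfold pd; rw [fderiv_fun_mul hf hg]; simp; ring

theorem pd_const_mul (c : ℝ) (hf : DifferentiableAt ℝ f x) :
    pd i (fun y => c * f y) x = c * pd i f x := by
  unfold pd; rw [fderiv_const_mul hf]; simp

theorem pd_sum {ι : Type*} (s : Finset ι) {F : ι → (Fin d → ℝ) → ℝ}
    (hF : ∀ j ∈ s, DifferentiableAt ℝ (F j) x) :
    pd i (fun y => ∑ j ∈ s, F j y) x = ∑ j ∈ s, pd i (F j) x := by
  unfold pd; rw [fderiv_fun_sum hF]; simp

theorem pd_comp {φ : ℝ → ℝ} (hφ : DifferentiableAt ℝ φ (f x)) (hf : DifferentiableAt ℝ f x) :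
    pd i (fun y => φ (f y)) x = deriv φ (f x) * pd i f x := by
  unfold pd
  rw [show (fun y => φ (f y)) = φ ∘ f from rfl, fderiv_comp x hφ hf]
  simp only [ContinuousLinearMap.comp_apply]
  rw [show fderiv ℝ f x (Pi.single i 1) = (fderiv ℝ f x (Pi.single i 1)) • (1:ℝ) by simp,
    (fderiv ℝ φ (f x)).map_smul]
  simp [fderiv_apply_one_eq_deriv, mul_comm]

theorem pd_inv (hg : DifferentiableAt ℝ g x) (h0 : g x ≠ 0) :
    pd i (fun y => (g y)⁻¹) x = -(pd i g x) / (g x)^2 := by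
  rw [pd_comp (differentiableAt_inv h0) hg, deriv_inv]
  field_simp

theorem pd_div (hf : DifferentiableAt ℝ f x) (hg : DifferentiableAt ℝ g x) (h0 : g x ≠ 0) :
    pd i (fun y => f y / g y) x = (pd i f x * g x - f x * pd i g x) / (g x)^2 := by
  have : (fun y => f y / g y) = fun y => f y * (g y)⁻¹ := by
    funext y; rw [div_eq_mul_inv]
  rw [this, pd_mul (g := fun y => (g y)⁻¹) hf (hg.inv h0), pd_inv hg h0]
  field_simp
  ring

theorem contDiffAt_pd (hf : ContDiffAt ℝ ∞ f x) : ContDiffAt ℝ ∞ (pd i f) x := by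
  have h1 : ContDiffAt ℝ ∞ (fderiv ℝ f) x := hf.fderiv_right (by simp)
  exact h1.clm_apply contDiffAt_const

theorem pd_symm (hf : ContDiffAt ℝ ∞ f x) :
    pd i (fun z => pd j f z) x = pd j (fun z => pd i f z) x := by
  have hd : DifferentiableAt ℝ (fderiv ℝ f) x :=
    (hf.fderiv_right (by simp : (∞:WithTop ℕ∞) + 1 ≤ ∞)).differentiableAt (by simp)
  have key : ∀ a b : Fin d, pd a (fun z => pd b f z) x
      = fderiv ℝ (fderiv ℝ f) x (Pi.single a 1) (Pi.single b 1) := by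
    intro a b
    unfold pd
    rw [fderiv_clm_apply hd (differentiableAt_const _)]
    simp
  rw [key, key, (hf.isSymmSndFDerivAt (by simp; exact ENat.LEInfty.out)) _ _]

end AuxPD

theorem key_identity {d : ℕ} {Ω : Set (Fin d → ℝ)} (hΩ : IsOpen Ω)
    (u g H c : (Fin d → ℝ) → ℝ)
    (hu : ∀ y ∈ Ω, ContDiffAt ℝ ∞ u y)
    (hg : ∀ y ∈ Ω, ContDiffAt ℝ ∞ g y)
    (hupos : ∀ y ∈ Ω, u y ≠ 0)
    (hgu : ∀ y ∈ Ω, ∀ i : Fin d, pd i g y = c y * pd i u y)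
    (hL : ∀ y ∈ Ω, ∀ j : Fin d, pd j H y = 2 * (u y * (g y * pd j u y)))
    {x : Fin d → ℝ} (hx : x ∈ Ω) (i : Fin d) :
    2 * (u x * u x) * pd i (fun y => g y * (∑ j, pd j (fun z => g z * pd j u z) y) / u y) x
      = pd i (fun y => g y * (∑ j, pd j (fun z => pd j H z) y)) x
        - 4 * ∑ j, pd j (fun y => (g y * pd i u y) * (g y * pd j u y)) x := by
  classical
  -- differentiability bookkeeping
  have hud : ∀ y ∈ Ω, DifferentiableAt ℝ u y := fun y hy => (hu y hy).differentiableAt (by simp)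
  have hgd : ∀ y ∈ Ω, DifferentiableAt ℝ g y := fun y hy => (hg y hy).differentiableAt (by simp)
  have hPc : ∀ y ∈ Ω, ∀ j : Fin d, ContDiffAt ℝ ∞ (fun z => pd j u z) y :=
    fun y hy j => contDiffAt_pd (hu y hy)
  have hBc : ∀ y ∈ Ω, ∀ j : Fin d, ContDiffAt ℝ ∞ (fun z => g z * pd j u z) y :=
    fun y hy j => (hg y hy).mul (hPc y hy j)
  have hBd : ∀ y ∈ Ω, ∀ j : Fin d, DifferentiableAt ℝ (fun z => g z * pd j u z) y :=
    fun y hy j => (hBc y hy j).differentiableAt (by simp)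
  have hDBc : ∀ y ∈ Ω, ContDiffAt ℝ ∞ (fun y' => ∑ j, pd j (fun z => g z * pd j u z) y') y :=
    fun y hy => ContDiffAt.sum (fun j _ => contDiffAt_pd (hBc y hy j))
  have hDBd : ∀ y ∈ Ω, DifferentiableAt ℝ (fun y' => ∑ j, pd j (fun z => g z * pd j u z) y') y :=
    fun y hy => (hDBc y hy).differentiableAt (by simp)
  have hNd : ∀ y ∈ Ω,
      DifferentiableAt ℝ (fun y' => g y' * (∑ j, pd j (fun z => g z * pd j u z) y')) y :=
    fun y hy => (hgd y hy).mul (hDBd y hy)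
  -- symmetry of the derivatives of b_j = g ∂_j u
  have hsym : ∀ i' j : Fin d,
      pd i' (fun z => g z * pd j u z) x = pd j (fun z => g z * pd i' u z) x := by
    intro i' j
    rw [pd_mul (hgd x hx) ((hPc x hx j).differentiableAt (by simp)),
      pd_mul (hgd x hx) ((hPc x hx i').differentiableAt (by simp)),
      hgu x hx i', hgu x hx j, pd_symm (hu x hx)]
    ring
  -- local formula for the Laplacian term
  have hlaploc : ∀ y ∈ Ω, ∀ j : Fin d, pd j (fun z => pd j H z) y
      = 2 * (pd j u y * (g y * pd j u y)) + 2 * (u y * pd j (fun z => g z * pd j u z) y) := by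
    intro y hy j
    have e1 : (fun z => pd j H z) =ᶠ[nhds y] (fun z => 2 * (u z * (g z * pd j u z))) :=
      eventuallyEq_of_mem (hΩ.mem_nhds hy) (fun z hz => hL z hz j)
    rw [pd_congr_nhds e1, pd_const_mul 2 ((hud y hy).fun_mul (hBd y hy j)),
      pd_mul (hud y hy) (hBd y hy j)]
    ring
  have hglap : ∀ y ∈ Ω, g y * (∑ j, pd j (fun z => pd j H z) y)
      = 2 * (∑ j, (g y * pd j u y) * (g y * pd j u y))
        + 2 * (u y * (g y * (∑ j, pd j (fun z => g z * pd j u z) y))) := by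
    intro y hy
    rw [Finset.mul_sum]
    calc ∑ j, g y * pd j (fun z => pd j H z) y
        = ∑ j, (2 * ((g y * pd j u y) * (g y * pd j u y))
            + (2 * (u y * g y)) * pd j (fun z => g z * pd j u z) y) := by
          refine Finset.sum_congr rfl fun j _ => ?_
          rw [hlaploc y hy j]; ring
      _ = _ := by
          rw [Finset.sum_add_distrib, ← Finset.mul_sum, ← Finset.mul_sum]
          ring
  -- E1 : quotient rule for the LHS
  have E1 : pd i (fun y => g y * (∑ j, pd j (fun z => g z * pd j u z) y) / u y) x
      = (pd i (fun y => g y * (∑ j, pd j (fun z => g z * pd j u z) y)) x * u x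
          - (g x * (∑ j, pd j (fun z => g z * pd j u z) x)) * pd i u x) / (u x)^2 :=
    pd_div (hNd x hx) (hud x hx) (hupos x hx)
  -- E2 : expansion of the first RHS term
  have c1 : DifferentiableAt ℝ (fun y => 2 * (∑ j, (g y * pd j u y) * (g y * pd j u y))) x := by
    have : ContDiffAt ℝ ∞ (fun y => 2 * (∑ j, (g y * pd j u y) * (g y * pd j u y))) x :=
      contDiffAt_const.mul (ContDiffAt.sum fun j _ => (hBc x hx j).mul (hBc x hx j))
    exact this.differentiableAt (by simp)
  have c2 : DifferentiableAt ℝ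
      (fun y => 2 * (u y * (g y * (∑ j, pd j (fun z => g z * pd j u z) y)))) x :=
    ((hud x hx).mul (hNd x hx)).const_mul 2
  have E2 : pd i (fun y => g y * (∑ j, pd j (fun z => pd j H z) y)) x
      = 4 * (∑ j, pd i (fun z => g z * pd j u z) x * (g x * pd j u x))
        + 2 * (pd i u x * (g x * (∑ j, pd j (fun z => g z * pd j u z) x)))
        + 2 * (u x * pd i (fun y => g y * (∑ j, pd j (fun z => g z * pd j u z) y)) x) := by
    have e2 : (fun y => g y * (∑ j, pd j (fun z => pd j H z) y))
        =ᶠ[nhds x] (fun y => 2 * (∑ j, (g y * pd j u y) * (g y * pd j u y))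
          + 2 * (u y * (g y * (∑ j, pd j (fun z => g z * pd j u z) y)))) :=
      eventuallyEq_of_mem (hΩ.mem_nhds hx) (fun y hy => hglap y hy)
    rw [pd_congr_nhds e2, pd_add c1 c2,
      pd_const_mul 2 (DifferentiableAt.fun_sum fun j _ => (hBd x hx j).fun_mul (hBd x hx j)),
      pd_const_mul 2 ((hud x hx).fun_mul (hNd x hx)),
      pd_sum Finset.univ (fun j _ => (hBd x hx j).fun_mul (hBd x hx j)),
      pd_mul (hud x hx) (hNd x hx)]
    have : ∑ j, pd i (fun y => (g y * pd j u y) * (g y * pd j u y)) x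
        = ∑ j, 2 * (pd i (fun z => g z * pd j u z) x * (g x * pd j u x)) := by
      refine Finset.sum_congr rfl fun j _ => ?_
      rw [pd_mul (hBd x hx j) (hBd x hx j)]; ring
    rw [this, ← Finset.mul_sum]
    ring
  -- E3 : expansion of the tensor divergence term
  have E3 : ∑ j, pd j (fun y => (g y * pd i u y) * (g y * pd j u y)) x
      = (∑ j, pd i (fun z => g z * pd j u z) x * (g x * pd j u x))
        + (g x * pd i u x) * (∑ j, pd j (fun z => g z * pd j u z) x) := by
    calc ∑ j, pd j (fun y => (g y * pd i u y) * (g y * pd j u y)) x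
        = ∑ j, (pd i (fun z => g z * pd j u z) x * (g x * pd j u x)
            + (g x * pd i u x) * pd j (fun z => g z * pd j u z) x) := by
          refine Finset.sum_congr rfl fun j _ => ?_
          rw [pd_mul (hBd x hx i) (hBd x hx j), (hsym i j).symm]
      _ = _ := by rw [Finset.sum_add_distrib, ← Finset.mul_sum]
  rw [E1, E2, E3]
  have h0 : u x ≠ 0 := hupos x hx
  field_simp
  ring

theorem statement2 (d : ℕ) (hd : 1 ≤ d) (Ω : Set (Fin d → ℝ)) (hΩ : IsOpen Ω)
    (ρ : (Fin d → ℝ) → ℝ) (hρpos : ∀ x ∈ Ω, 0 < ρ x) (hρ : ContDiffOn ℝ (⊤ : ℕ∞) ρ Ω)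
    (h : ℝ → ℝ) (hh : ContDiffOn ℝ (⊤ : ℕ∞) h (Set.Ioi 0)) :
    ∀ x ∈ Ω, ∀ i : Fin d,
      2 * ρ x * grad (fun y => deriv h (ρ y) *
          dvg (fun z => deriv h (ρ z) • grad (fun w => Real.sqrt (ρ w)) z) y /
          Real.sqrt (ρ y)) x i
        = grad (fun y => deriv h (ρ y) * lap (fun z => h (ρ z)) y) x i
          - 4 * dvgM (fun y => tens (deriv h (ρ y) • grad (fun z => Real.sqrt (ρ z)) y)
              (deriv h (ρ y) • grad (fun z => Real.sqrt (ρ z)) y)) x i := by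
  intro x hx i
  have hρat : ∀ y ∈ Ω, ContDiffAt ℝ ∞ ρ y := fun y hy => hρ.contDiffAt (hΩ.mem_nhds hy)
  have hρd : ∀ y ∈ Ω, DifferentiableAt ℝ ρ y := fun y hy => (hρat y hy).differentiableAt (by simp)
  have hmem : ∀ y ∈ Ω, ρ y ∈ Set.Ioi (0:ℝ) := fun y hy => hρpos y hy
  have hdh : ContDiffOn ℝ ∞ (deriv h) (Set.Ioi 0) := hh.deriv_of_isOpen isOpen_Ioi (by simp)
  have hu : ∀ y ∈ Ω, ContDiffAt ℝ ∞ (fun w => Real.sqrt (ρ w)) y :=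
    fun y hy => (contDiffAt_sqrt (hρpos y hy).ne').comp y (hρat y hy)
  have hg : ∀ y ∈ Ω, ContDiffAt ℝ ∞ (fun y' => deriv h (ρ y')) y :=
    fun y hy => (hdh.contDiffAt (isOpen_Ioi.mem_nhds (hmem y hy))).comp y (hρat y hy)
  have hupos : ∀ y ∈ Ω, Real.sqrt (ρ y) ≠ 0 :=
    fun y hy => (Real.sqrt_pos.mpr (hρpos y hy)).ne'
  have hρu : ∀ y ∈ Ω, ∀ j : Fin d,
      pd j ρ y = 2 * Real.sqrt (ρ y) * pd j (fun w => Real.sqrt (ρ w)) y := by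
    intro y hy j
    have hder : deriv Real.sqrt (ρ y) = 1 / (2 * Real.sqrt (ρ y)) :=
      (Real.hasStrictDerivAt_sqrt (hρpos y hy).ne').hasDerivAt.deriv
    have hds : DifferentiableAt ℝ Real.sqrt (ρ y) :=
      (Real.hasStrictDerivAt_sqrt (hρpos y hy).ne').hasDerivAt.differentiableAt
    have e : pd j (fun w => Real.sqrt (ρ w)) y = 1 / (2 * Real.sqrt (ρ y)) * pd j ρ y := by
      rw [pd_comp hds (hρd y hy), hder]
    rw [e]
    have := hupos y hy
    field_simp
  have hdiffh : ∀ y ∈ Ω, DifferentiableAt ℝ h (ρ y) :=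
    fun y hy => (hh.contDiffAt (isOpen_Ioi.mem_nhds (hmem y hy))).differentiableAt (by simp)
  have hdiffdh : ∀ y ∈ Ω, DifferentiableAt ℝ (deriv h) (ρ y) :=
    fun y hy => (hdh.contDiffAt (isOpen_Ioi.mem_nhds (hmem y hy))).differentiableAt (by simp)
  have hgu : ∀ y ∈ Ω, ∀ i' : Fin d, pd i' (fun y' => deriv h (ρ y')) y
      = (deriv (deriv h) (ρ y) * (2 * Real.sqrt (ρ y))) * pd i' (fun w => Real.sqrt (ρ w)) y := by
    intro y hy i'
    rw [pd_comp (hdiffdh y hy) (hρd y hy), hρu y hy i']; ring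
  have hL : ∀ y ∈ Ω, ∀ j : Fin d, pd j (fun z => h (ρ z)) y
      = 2 * (Real.sqrt (ρ y) * (deriv h (ρ y) * pd j (fun w => Real.sqrt (ρ w)) y)) := by
    intro y hy j
    rw [pd_comp (hdiffh y hy) (hρd y hy), hρu y hy j]; ring
  have key := key_identity hΩ (fun w => Real.sqrt (ρ w)) (fun y => deriv h (ρ y))
    (fun z => h (ρ z)) (fun y => deriv (deriv h) (ρ y) * (2 * Real.sqrt (ρ y)))
    hu hg hupos hgu hL hx i
  simp only [grad, dvg, dvgM, lap, tens, Pi.smul_apply, smul_eq_mul]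
  rw [show ρ x = Real.sqrt (ρ x) * Real.sqrt (ρ x) from (Real.mul_self_sqrt (hρpos x hx).le).symm]
  exact key

end
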